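/- Assume h^H b ≠ 0, h and b are linearly independent (so b_⊥ ≠ 0), and P_t·|h^H b|²/‖b‖² ≤ σ²γ̄ ≤ P_t·‖h‖². Then every feasible pair (R₁, R') of the rank-relaxed problem (and hence of problem (22)) satisfies b^H(R₁+R')b ≤ ( |β|·√(σ²γ̄)/‖h‖ + ‖b_⊥‖·√(P_t − σ²γ̄/‖h‖²) )². Consequently the beamformer w̄ = √(σ²γ̄/‖h‖²)·h̄·(β/|β|) + √(P_t − σ²γ̄/‖h‖²)·b̄_⊥ of Eq. (23) yields an optimal solution (w̄ w̄^H, 0) of problem (22). (Theorem 1, second case: optimality.) -/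

import Mathlib

open Matrix Finset ComplexOrder

noncomputable def quadForm {M : ℕ} (R : Matrix (Fin M) (Fin M) ℂ) (v : Fin M → ℂ) : ℝ :=
  (star v ⬝ᵥ (R *ᵥ v)).re

noncomputable def normSqV {M : ℕ} (v : Fin M → ℂ) : ℝ :=
  ∑ i, Complex.normSq (v i)

noncomputable def normV {M : ℕ} (v : Fin M → ℂ) : ℝ :=
  Real.sqrt (normSqV v)

def FeasibleRelaxed {M : ℕ} (Pt σ γ : ℝ) (h : Fin M → ℂ)
    (R₁ R' : Matrix (Fin M) (Fin M) ℂ) : Prop :=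
  R₁.PosSemidef ∧ R'.PosSemidef ∧ σ ^ 2 * γ ≤ quadForm R₁ h ∧ ((R₁ + R').trace).re ≤ Pt

def Feasible22 {M : ℕ} (Pt σ γ : ℝ) (h : Fin M → ℂ)
    (R₁ R' : Matrix (Fin M) (Fin M) ℂ) : Prop :=
  FeasibleRelaxed Pt σ γ h R₁ R' ∧ R₁.rank ≤ 1 ∧ R'.rank ≤ M - 1

/-!
In the orthonormal frame `h̄, b̄⊥` we have `b = β h̄ + ‖b⊥‖ b̄⊥`. Writing `R₁ + R' = BᴴB`, the
objective is `‖B b‖²`, so with `a = ‖B h̄‖²` and `d = ‖B b̄⊥‖²` the triangle inequality gives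
`bᴴ(R₁ + R')b ≤ (|β| √a + ‖b⊥‖ √d)²`. The constraints give `a ≥ s := σ²γ̄/‖h‖²` and, by Bessel's
inequality applied to the rows of `B`, `a + d ≤ tr(R₁ + R') ≤ P_t`. The concave function
`a ↦ |β| √a + ‖b⊥‖ √(P_t - a)` peaks at `a = P_t |β|²/‖b‖²`, which the lower bound on `σ²γ̄`
places at or below `s`; hence the bound is attained at `a = s`, `d = P_t - s`, which is exactly
what the rank-one beamformer `w̄ = √s (β/|β|) h̄ + √(P_t - s) b̄⊥` achieves.
-/

lemma mul_sqrt_add_mul_sqrt_le {p q s a d P : ℝ} (hp : 0 ≤ p) (hq : 0 ≤ q) (hs : 0 ≤ s)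
    (hsa : s ≤ a) (hd : 0 ≤ d) (had : a + d ≤ P) (hpq : p ^ 2 * (P - s) ≤ q ^ 2 * s) :
    p * √a + q * √d ≤ p * √s + q * √(P - s) := by
  have hA := Real.sq_sqrt (hs.trans hsa)
  have hS := Real.sq_sqrt hs
  have hC := Real.sq_sqrt (show 0 ≤ P - s by linarith)
  have hD := Real.sq_sqrt hd
  have hSA : √s ≤ √a := Real.sqrt_le_sqrt hsa
  have hDC : √d ≤ √(P - s) := Real.sqrt_le_sqrt (by linarith)
  have hpC : p * √(P - s) ≤ q * √s := by
    rw [← pow_le_pow_iff_left₀ (by positivity) (by positivity) two_ne_zero, mul_pow, mul_pow,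
      hC, hS]
    exact hpq
  -- `(√(P-s) - √d)(√(P-s) + √d) ≥ (√a - √s)(√a + √s)` and `p (√(P-s) + √d) ≤ q (√a + √s)`
  have hprod : p * (√a - √s) * (√(P - s) + √d) ≤ q * (√(P - s) - √d) * (√(P - s) + √d) := by
    nlinarith [mul_le_mul_of_nonneg_left hDC hp, mul_le_mul_of_nonneg_left hSA hq,
      mul_nonneg hp (sub_nonneg.2 hSA), Real.sqrt_nonneg s]
  rcases (add_nonneg (Real.sqrt_nonneg (P - s)) (Real.sqrt_nonneg d)).eq_or_lt with h0 | hpos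
  · have hC0 : √(P - s) = 0 := by linarith [Real.sqrt_nonneg (P - s), Real.sqrt_nonneg d]
    have hD0 : √d = 0 := by linarith [Real.sqrt_nonneg (P - s), Real.sqrt_nonneg d]
    have : √a = √s := by nlinarith [Real.sqrt_nonneg a, Real.sqrt_nonneg s]
    rw [this, hC0, hD0]
  · nlinarith [le_of_mul_le_mul_right hprod hpos]

section

variable {M : ℕ}

lemma normSqV_eq_norm_sq (v : Fin M → ℂ) : normSqV v = ‖WithLp.toLp 2 v‖ ^ 2 := by
  simp [normSqV, EuclideanSpace.norm_sq_eq, Complex.sq_norm]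

lemma normV_eq_norm (v : Fin M → ℂ) : normV v = ‖WithLp.toLp 2 v‖ := by
  rw [normV, normSqV_eq_norm_sq, Real.sqrt_sq (norm_nonneg _)]

lemma normV_sq (v : Fin M → ℂ) : normV v ^ 2 = normSqV v := by
  rw [normV_eq_norm, normSqV_eq_norm_sq]

lemma normV_pos {v : Fin M → ℂ} (hv : v ≠ 0) : 0 < normV v := by
  rw [normV_eq_norm]; simpa using hv

lemma normSqV_star (v : Fin M → ℂ) : normSqV (star v) = normSqV v := by
  simp [normSqV]

lemma star_dotProduct_eq_inner (u v : Fin M → ℂ) :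
    star u ⬝ᵥ v = inner ℂ (WithLp.toLp 2 u) (WithLp.toLp 2 v) := by
  rw [EuclideanSpace.inner_toLp_toLp, dotProduct_comm]

lemma star_dotProduct_self (v : Fin M → ℂ) : star v ⬝ᵥ v = normSqV v := by
  rw [star_dotProduct_eq_inner, inner_self_eq_norm_sq_to_K, normSqV_eq_norm_sq]
  push_cast; rfl

lemma star_dotProduct_normalize_self {v : Fin M → ℂ} (hv : v ≠ 0) :
    star ((normV v : ℂ)⁻¹ • v) ⬝ᵥ ((normV v : ℂ)⁻¹ • v) = 1 := by
  have hn : (normV v : ℂ) ≠ 0 := Complex.ofReal_ne_zero.2 (normV_pos hv).ne'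
  rw [star_smul, smul_dotProduct, dotProduct_smul, star_dotProduct_self, ← normV_sq,
    Complex.star_def, map_inv₀, Complex.conj_ofReal, smul_eq_mul, smul_eq_mul]
  push_cast
  field_simp

lemma orthonormal_toLp_pair {u v : Fin M → ℂ} (hu : star u ⬝ᵥ u = 1) (hv : star v ⬝ᵥ v = 1)
    (huv : star u ⬝ᵥ v = 0) : Orthonormal ℂ ![WithLp.toLp 2 u, WithLp.toLp 2 v] := by
  have hvu : star v ⬝ᵥ u = 0 := by rw [star_dotProduct, huv, star_zero]
  rw [orthonormal_iff_ite]
  simp only [Fin.forall_fin_two, Matrix.cons_val_zero, Matrix.cons_val_one,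
    ← star_dotProduct_eq_inner, hu, hv, huv, hvu]
  simp

lemma star_smul_add_smul_dotProduct {u v : Fin M → ℂ} (hu : star u ⬝ᵥ u = 1)
    (hv : star v ⬝ᵥ v = 1) (huv : star u ⬝ᵥ v = 0) (c₁ c₂ d₁ d₂ : ℂ) :
    star (c₁ • u + c₂ • v) ⬝ᵥ (d₁ • u + d₂ • v) = star c₁ * d₁ + star c₂ * d₂ := by
  have hvu : star v ⬝ᵥ u = 0 := by rw [star_dotProduct, huv, star_zero]
  simp [add_dotProduct, dotProduct_add, hu, hv, huv, hvu, mul_comm]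

lemma normSqV_smul_add_smul {u v : Fin M → ℂ} (hu : star u ⬝ᵥ u = 1)
    (hv : star v ⬝ᵥ v = 1) (huv : star u ⬝ᵥ v = 0) (c₁ c₂ : ℂ) :
    normSqV (c₁ • u + c₂ • v) = Complex.normSq c₁ + Complex.normSq c₂ := by
  have := star_smul_add_smul_dotProduct hu hv huv c₁ c₂ c₁ c₂
  rw [star_dotProduct_self, Complex.star_def, ← Complex.normSq_eq_conj_mul_self,
    ← Complex.normSq_eq_conj_mul_self] at this
  exact_mod_cast this

lemma orthonormal_gramSchmidt_pair {h b u p v : Fin M → ℂ} {β : ℂ}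
    (hind : LinearIndependent ℂ ![h, b]) (hu : u = (normV h : ℂ)⁻¹ • h)
    (hβ : β = star u ⬝ᵥ b) (hp : p = b - β • u) (hv : v = (normV p : ℂ)⁻¹ • p) :
    star u ⬝ᵥ u = 1 ∧ star v ⬝ᵥ v = 1 ∧ star u ⬝ᵥ v = 0 ∧
      h = (normV h : ℂ) • u ∧ b = β • u + (normV p : ℂ) • v := by
  have hh : h ≠ 0 := hind.ne_zero 0
  have huu : star u ⬝ᵥ u = 1 := hu ▸ star_dotProduct_normalize_self hh
  have hp0 : p ≠ 0 := by
    rw [hp, hu, smul_smul, sub_ne_zero, ne_comm]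
    exact (LinearIndependent.pair_iff' hh).1 hind _
  refine ⟨huu, hv ▸ star_dotProduct_normalize_self hp0, ?_, ?_, ?_⟩
  · rw [hv, dotProduct_smul, hp, dotProduct_sub, dotProduct_smul, huu, ← hβ, smul_eq_mul,
      smul_eq_mul, mul_one, sub_self, mul_zero]
  · rw [hu, smul_inv_smul₀ (Complex.ofReal_ne_zero.2 (normV_pos hh).ne')]
  · rw [hv, smul_inv_smul₀ (Complex.ofReal_ne_zero.2 (normV_pos hp0).ne'), hp, add_sub_cancel]

lemma re_trace_conjTranspose_mul_self (B : Matrix (Fin M) (Fin M) ℂ) :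
    (Bᴴ * B).trace.re = ∑ i, normSqV (B i) := by
  simp only [trace, Matrix.diag, mul_apply, conjTranspose_apply, Complex.re_sum, normSqV]
  rw [Finset.sum_comm]
  simp [Complex.normSq_apply]

lemma quadForm_conjTranspose_mul_self (B : Matrix (Fin M) (Fin M) ℂ) (x : Fin M → ℂ) :
    quadForm (Bᴴ * B) x = normSqV (B *ᵥ x) := by
  rw [quadForm, ← mulVec_mulVec, dotProduct_mulVec, ← star_mulVec, star_dotProduct_self,
    Complex.ofReal_re]

lemma quadForm_add (R R' : Matrix (Fin M) (Fin M) ℂ) (x : Fin M → ℂ) :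
    quadForm (R + R') x = quadForm R x + quadForm R' x := by
  simp [quadForm, add_mulVec]

lemma quadForm_smul (R : Matrix (Fin M) (Fin M) ℂ) (c : ℂ) (x : Fin M → ℂ) :
    quadForm R (c • x) = Complex.normSq c * quadForm R x := by
  rw [quadForm, mulVec_smul, star_smul, smul_dotProduct, dotProduct_smul, smul_eq_mul,
    smul_eq_mul, ← mul_assoc, Complex.star_def, ← Complex.normSq_eq_conj_mul_self,
    Complex.re_ofReal_mul, quadForm]

lemma quadForm_vecMulVec_star (w x : Fin M → ℂ) :
    quadForm (vecMulVec w (star w)) x = Complex.normSq (star w ⬝ᵥ x) := by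
  rw [quadForm, vecMulVec_mulVec, dotProduct_smul, op_smul_eq_mul, star_dotProduct,
    Complex.star_def, ← Complex.normSq_eq_conj_mul_self, Complex.ofReal_re]

lemma re_trace_vecMulVec_star (w : Fin M → ℂ) :
    (vecMulVec w (star w)).trace.re = normSqV w := by
  rw [trace_vecMulVec, dotProduct_comm, star_dotProduct_self, Complex.ofReal_re]

namespace Matrix.PosSemidef

variable {R : Matrix (Fin M) (Fin M) ℂ}

lemma quadForm_nonneg (hR : R.PosSemidef) (x : Fin M → ℂ) : 0 ≤ quadForm R x :=
  (Complex.le_def.mp (hR.dotProduct_mulVec_nonneg x)).1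

lemma exists_eq_conjTranspose_mul_self (hR : R.PosSemidef) : ∃ B, R = Bᴴ * B := by
  open scoped MatrixOrder in
  exact CStarAlgebra.nonneg_iff_eq_star_mul_self.mp hR.nonneg

lemma quadForm_smul_add_smul_le (hR : R.PosSemidef) (c₁ c₂ : ℂ) (x y : Fin M → ℂ) :
    quadForm R (c₁ • x + c₂ • y) ≤ (‖c₁‖ * √(quadForm R x) + ‖c₂‖ * √(quadForm R y)) ^ 2 := by
  obtain ⟨B, rfl⟩ := hR.exists_eq_conjTranspose_mul_self
  simp only [quadForm_conjTranspose_mul_self, normSqV_eq_norm_sq, Real.sqrt_sq (norm_nonneg _),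
    mulVec_add, mulVec_smul, WithLp.toLp_add, WithLp.toLp_smul]
  gcongr
  exact (norm_add_le _ _).trans_eq (by rw [norm_smul, norm_smul])

lemma quadForm_add_quadForm_le_trace (hR : R.PosSemidef) {u v : Fin M → ℂ}
    (hu : star u ⬝ᵥ u = 1) (hv : star v ⬝ᵥ v = 1) (huv : star u ⬝ᵥ v = 0) :
    quadForm R u + quadForm R v ≤ R.trace.re := by
  obtain ⟨B, rfl⟩ := hR.exists_eq_conjTranspose_mul_self
  have hrow : ∀ i, Complex.normSq ((B *ᵥ u) i) + Complex.normSq ((B *ᵥ v) i)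
      ≤ normSqV (B i) := by
    intro i
    have hentry : ∀ x, Complex.normSq ((B *ᵥ x) i)
        = ‖inner ℂ (WithLp.toLp 2 x) (WithLp.toLp 2 (star (B i)))‖ ^ 2 := fun x => by
      rw [← star_dotProduct_eq_inner, star_dotProduct_star, norm_star, Complex.sq_norm]; rfl
    rw [hentry, hentry, ← normSqV_star, normSqV_eq_norm_sq]
    simpa [Fin.sum_univ_two] using
      (orthonormal_toLp_pair hu hv huv).sum_inner_products_le (s := Finset.univ) _
  calc quadForm (Bᴴ * B) u + quadForm (Bᴴ * B) v
      = ∑ i, (Complex.normSq ((B *ᵥ u) i) + Complex.normSq ((B *ᵥ v) i)) := by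
        simp only [quadForm_conjTranspose_mul_self, normSqV, Finset.sum_add_distrib]
    _ ≤ ∑ i, normSqV (B i) := Finset.sum_le_sum fun i _ => hrow i
    _ = (Bᴴ * B).trace.re := (re_trace_conjTranspose_mul_self B).symm

end Matrix.PosSemidef

lemma FeasibleRelaxed.quadForm_smul_add_smul_le {P σ γ n s q : ℝ} {β : ℂ}
    {h u v : Fin M → ℂ} {R₁ R' : Matrix (Fin M) (Fin M) ℂ}
    (hf : FeasibleRelaxed P σ γ h R₁ R') (hu : star u ⬝ᵥ u = 1) (hv : star v ⬝ᵥ v = 1)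
    (huv : star u ⬝ᵥ v = 0) (hh : h = (n : ℂ) • u) (hn : n ≠ 0) (hσγ : σ ^ 2 * γ = n ^ 2 * s)
    (hs : 0 ≤ s) (hq : 0 ≤ q) (hβq : ‖β‖ ^ 2 * (P - s) ≤ q ^ 2 * s) :
    quadForm (R₁ + R') (β • u + (q : ℂ) • v) ≤ (‖β‖ * √s + q * √(P - s)) ^ 2 := by
  obtain ⟨hR₁, hR', hR₁h, hP⟩ := hf
  have hR := hR₁.add hR'
  have hsu : s ≤ quadForm (R₁ + R') u := by
    have hscale : quadForm (R₁ + R') h = n ^ 2 * quadForm (R₁ + R') u := by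
      rw [hh, quadForm_smul, Complex.normSq_ofReal, sq]
    refine le_of_mul_le_mul_left ?_ (by positivity : 0 < n ^ 2)
    rw [← hσγ, ← hscale, quadForm_add]
    linarith [hR'.quadForm_nonneg h]
  calc quadForm (R₁ + R') (β • u + (q : ℂ) • v)
      ≤ (‖β‖ * √(quadForm (R₁ + R') u) + q * √(quadForm (R₁ + R') v)) ^ 2 := by
        simpa [abs_of_nonneg hq] using hR.quadForm_smul_add_smul_le β q u v
    _ ≤ (‖β‖ * √s + q * √(P - s)) ^ 2 :=
        pow_le_pow_left₀ (by positivity) (mul_sqrt_add_mul_sqrt_le (norm_nonneg β) hq hs hsu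
          (hR.quadForm_nonneg v) ((hR.quadForm_add_quadForm_le_trace hu hv huv).trans hP) hβq) 2

lemma feasible22_vecMulVec_star {u v h w : Fin M → ℂ} (hu : star u ⬝ᵥ u = 1)
    (hv : star v ⬝ᵥ v = 1) (huv : star u ⬝ᵥ v = 0) {n s P σ γ : ℝ} {c : ℂ} (hc : ‖c‖ = 1)
    (hh : h = (n : ℂ) • u) (hs : 0 ≤ s) (hsP : s ≤ P) (hσγ : σ ^ 2 * γ = n ^ 2 * s)
    (hw : w = (√s : ℂ) • (c • u) + (√(P - s) : ℂ) • v) :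
    Feasible22 P σ γ h (vecMulVec w (star w)) 0 := by
  have hvu : star v ⬝ᵥ u = 0 := by rw [star_dotProduct, huv, star_zero]
  rw [smul_smul] at hw
  have hc' : Complex.normSq c = 1 := by rw [← Complex.sq_norm, hc, one_pow]
  refine ⟨⟨posSemidef_vecMulVec_self_star w, .zero, ?_, ?_⟩, rank_vecMulVec_le _ _, by simp⟩
  · have hwu : star w ⬝ᵥ u = star ((√s : ℂ) * c) := by
      simp [hw, add_dotProduct, hu, hvu]
    rw [quadForm_vecMulVec_star, hh, dotProduct_smul, hwu, smul_eq_mul, Complex.normSq_mul,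
      Complex.star_def, Complex.normSq_conj, Complex.normSq_mul, hc', Complex.normSq_ofReal,
      Complex.normSq_ofReal, Real.mul_self_sqrt hs, hσγ]
    exact le_of_eq (by ring)
  · rw [add_zero, re_trace_vecMulVec_star, hw, normSqV_smul_add_smul hu hv huv,
      Complex.normSq_mul, hc', Complex.normSq_ofReal, Complex.normSq_ofReal,
      Real.mul_self_sqrt hs, Real.mul_self_sqrt (sub_nonneg.2 hsP)]
    linarith

lemma quadForm_vecMulVec_star_smul_add_smul {u v w : Fin M → ℂ} (hu : star u ⬝ᵥ u = 1)
    (hv : star v ⬝ᵥ v = 1) (huv : star u ⬝ᵥ v = 0) {s t q : ℝ} {β : ℂ} (hβ : β ≠ 0)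
    (hw : w = (√s : ℂ) • ((β / (‖β‖ : ℂ)) • u) + (√t : ℂ) • v) :
    quadForm (vecMulVec w (star w)) (β • u + (q : ℂ) • v) = (‖β‖ * √s + q * √t) ^ 2 := by
  have hβ' : (‖β‖ : ℂ) ≠ 0 := Complex.ofReal_ne_zero.2 (norm_ne_zero_iff.2 hβ)
  have hwb : star w ⬝ᵥ (β • u + (q : ℂ) • v) = ((‖β‖ * √s + q * √t : ℝ) : ℂ) := by
    rw [hw, smul_smul, star_smul_add_smul_dotProduct hu hv huv, star_mul', star_div₀,
      Complex.star_def, Complex.conj_ofReal, Complex.conj_ofReal, Complex.conj_ofReal]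
    field_simp
    rw [mul_assoc _ _ β, Complex.conj_mul']
    push_cast; ring
  rw [quadForm_vecMulVec_star, hwb, Complex.normSq_ofReal, sq]

end

theorem stmt_3_general {M : ℕ} (h b : Fin M → ℂ) (hh : h ≠ 0)
    (Pt σ γ : ℝ) (hγ : 0 ≤ γ)
    (hbar : Fin M → ℂ) (hhbar : hbar = (normV h : ℂ)⁻¹ • h)
    (β : ℂ) (hβ : β = star hbar ⬝ᵥ b)
    (bperp : Fin M → ℂ) (hbperp : bperp = b - β • hbar)
    (bperpbar : Fin M → ℂ) (hbperpbar : bperpbar = (normV bperp : ℂ)⁻¹ • bperp)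
    (hβne : star h ⬝ᵥ b ≠ 0)
    (hindep : LinearIndependent ℂ ![h, b])
    (hlow : Pt * Complex.normSq (star h ⬝ᵥ b) / normSqV b ≤ σ ^ 2 * γ)
    (hhigh : σ ^ 2 * γ ≤ Pt * normSqV h)
    (w : Fin M → ℂ)
    (hw : w = ((Real.sqrt (σ ^ 2 * γ / normSqV h) : ℝ) : ℂ) • ((β / (‖β‖ : ℂ)) • hbar)
            + ((Real.sqrt (Pt - σ ^ 2 * γ / normSqV h) : ℝ) : ℂ) • bperpbar) :
    (∀ R₁ R', FeasibleRelaxed Pt σ γ h R₁ R' →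
      quadForm (R₁ + R') b ≤ (‖β‖ * Real.sqrt (σ ^ 2 * γ) / normV h
        + normV bperp * Real.sqrt (Pt - σ ^ 2 * γ / normSqV h)) ^ 2) ∧
    Feasible22 Pt σ γ h (vecMulVec w (star w)) 0 ∧
    ∀ R₁ R', Feasible22 Pt σ γ h R₁ R' →
      quadForm (R₁ + R') b ≤ quadForm (vecMulVec w (star w) + 0) b := by
  obtain ⟨hu, hv, huv, hh_eq, hb_eq⟩ :=
    orthonormal_gramSchmidt_pair hindep hhbar hβ hbperp hbperpbar
  have hN : 0 < normSqV h := normV_sq h ▸ pow_pos (normV_pos hh) 2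
  set s := σ ^ 2 * γ / normSqV h with hs_def
  have hs : 0 ≤ s := by positivity
  have hσγ : σ ^ 2 * γ = normV h ^ 2 * s := by rw [normV_sq, hs_def]; field_simp
  have hhb : star h ⬝ᵥ b = normV h * β := by
    conv_lhs => rw [hh_eq]
    rw [star_smul, smul_dotProduct, ← hβ, Complex.star_def, Complex.conj_ofReal, smul_eq_mul]
  have hβ0 : β ≠ 0 := by rintro rfl; exact hβne (by rw [hhb, mul_zero])
  have hβq : ‖β‖ ^ 2 * (Pt - s) ≤ normV bperp ^ 2 * s := by
    have hNb : normSqV b = ‖β‖ ^ 2 + normV bperp ^ 2 := by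
      rw [hb_eq, normSqV_smul_add_smul hu hv huv, Complex.normSq_ofReal, ← Complex.sq_norm, sq,
        sq]
    rw [hhb, Complex.normSq_mul, Complex.normSq_ofReal, ← sq, normV_sq, ← Complex.sq_norm, hNb,
      div_le_iff₀ (by have := norm_pos_iff.2 hβ0; positivity), hσγ, normV_sq] at hlow
    refine le_of_mul_le_mul_left ?_ hN
    linear_combination hlow
  have hbound : ∀ R₁ R', FeasibleRelaxed Pt σ γ h R₁ R' →
      quadForm (R₁ + R') b ≤ (‖β‖ * √s + normV bperp * √(Pt - s)) ^ 2 := fun R₁ R' hf => by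
    rw [hb_eq]
    exact hf.quadForm_smul_add_smul_le hu hv huv hh_eq (normV_pos hh).ne' hσγ hs
      (Real.sqrt_nonneg _) hβq
  have hval : quadForm (vecMulVec w (star w) + 0) b
      = (‖β‖ * √s + normV bperp * √(Pt - s)) ^ 2 := by
    rw [add_zero, hb_eq]; exact quadForm_vecMulVec_star_smul_add_smul hu hv huv hβ0 hw
  have hsqrt : √(σ ^ 2 * γ) / normV h = √s := (Real.sqrt_div' _ hN.le).symm
  have hunit : ‖β / (‖β‖ : ℂ)‖ = 1 := by
    rw [norm_div, Complex.norm_real, norm_norm, div_self (norm_ne_zero_iff.2 hβ0)]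
  rw [mul_div_assoc, hsqrt]
  exact ⟨hbound, feasible22_vecMulVec_star hu hv huv hunit hh_eq hs ((div_le_iff₀ hN).2 hhigh)
    hσγ hw, fun R₁ R' hf => hval ▸ hbound R₁ R' hf.1⟩

/-- Theorem 1, second case (optimality): under `hᴴ b ≠ 0`, linear independence of `h, b`
and `P_t |hᴴb|²/‖b‖² ≤ σ²γ̄ ≤ P_t ‖h‖²`, every feasible pair of the rank-relaxed problem
satisfies `bᴴ(R₁+R')b ≤ (|β|√(σ²γ̄)/‖h‖ + ‖b⊥‖√(P_t − σ²γ̄/‖h‖²))²`, and the closed-form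
beamformer `w̄` of Eq. (23) yields an optimal solution `(w̄ w̄ᴴ, 0)` of problem (22). -/
theorem stmt_3 {M : ℕ} (hM : 1 ≤ M) (h b : Fin M → ℂ) (hh : h ≠ 0) (hb : b ≠ 0)
    (Pt σ γ : ℝ) (hPt : 0 < Pt) (hσ : 0 < σ) (hγ : 0 ≤ γ)
    (hbar : Fin M → ℂ) (hhbar : hbar = (normV h : ℂ)⁻¹ • h)
    (β : ℂ) (hβ : β = star hbar ⬝ᵥ b)
    (bperp : Fin M → ℂ) (hbperp : bperp = b - β • hbar)
    (bperpbar : Fin M → ℂ) (hbperpbar : bperpbar = (normV bperp : ℂ)⁻¹ • bperp)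
    (hβne : star h ⬝ᵥ b ≠ 0)
    (hindep : LinearIndependent ℂ ![h, b])
    (hlow : Pt * Complex.normSq (star h ⬝ᵥ b) / normSqV b ≤ σ ^ 2 * γ)
    (hhigh : σ ^ 2 * γ ≤ Pt * normSqV h)
    (w : Fin M → ℂ)
    (hw : w = ((Real.sqrt (σ ^ 2 * γ / normSqV h) : ℝ) : ℂ) • ((β / (‖β‖ : ℂ)) • hbar)
            + ((Real.sqrt (Pt - σ ^ 2 * γ / normSqV h) : ℝ) : ℂ) • bperpbar) :
    (∀ R₁ R', FeasibleRelaxed Pt σ γ h R₁ R' →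
      quadForm (R₁ + R') b ≤ (‖β‖ * Real.sqrt (σ ^ 2 * γ) / normV h
        + normV bperp * Real.sqrt (Pt - σ ^ 2 * γ / normSqV h)) ^ 2) ∧
    Feasible22 Pt σ γ h (vecMulVec w (star w)) 0 ∧
    ∀ R₁ R', Feasible22 Pt σ γ h R₁ R' →
      quadForm (R₁ + R') b ≤ quadForm (vecMulVec w (star w) + 0) b :=
  stmt_3_general h b hh Pt σ γ hγ hbar hhbar β hβ bperp hbperp bperpbar hbperpbar hβne hindep hlow
    hhigh w hw
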